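/- (Inclusion property of trimmed serendipity spaces) For n, r ≥ 1 and 0 ≤ k ≤ n: S_rΛ^k(ℝ^n) ⊆ S_{r+1}^−Λ^k(ℝ^n) ⊆ S_{r+1}Λ^k(ℝ^n). -/

import Mathlib

open MvPolynomial

/-- Polynomial differential forms on `ℝ^n`: a family of polynomial coefficients indexed by
subsets `σ ⊆ {1,…,n}`; a `k`-form is supported on sets of cardinality `k`. -/
abbrev PolyForm (n : ℕ) := Finset (Fin n) → MvPolynomial (Fin n) ℝ

/-- The sign `(-1)^{#{j ∈ σ : j < i}}`. -/
noncomputable def sgn {n : ℕ} (σ : Finset (Fin n)) (i : Fin n) : MvPolynomial (Fin n) ℝ :=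
  (-1) ^ (σ.filter (fun j => j < i)).card

/-- The exterior derivative `d`. -/
noncomputable def extD (n : ℕ) : PolyForm n →ₗ[ℝ] PolyForm n where
  toFun ω := fun σ => ∑ i ∈ σ, sgn σ i * pderiv i (ω (σ.erase i))
  map_add' ω η := by
    funext σ
    simp [Pi.add_apply, mul_add, Finset.sum_add_distrib]
  map_smul' c ω := by
    funext σ
    simp [Pi.smul_apply, Finset.smul_sum, mul_smul_comm]

/-- The Koszul operator `κ` (contraction with the position vector field). -/
noncomputable def koszul (n : ℕ) : PolyForm n →ₗ[ℝ] PolyForm n where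
  toFun ω := fun σ => ∑ i ∈ σᶜ, sgn σ i * X i * ω (insert i σ)
  map_add' ω η := by
    funext σ
    simp [Pi.add_apply, mul_add, Finset.sum_add_distrib]
  map_smul' c ω := by
    funext σ
    simp [Pi.smul_apply, Finset.smul_sum, mul_smul_comm]

/-- The space of (polynomial) differential `k`-forms: families supported on index sets of
cardinality `k`. -/
noncomputable def Lambda (n k : ℕ) : Submodule ℝ (PolyForm n) where
  carrier := {ω | ∀ σ, σ.card ≠ k → ω σ = 0}
  zero_mem' := fun σ _ => rfl
  add_mem' := fun ha hb σ h => by simp only [Pi.add_apply, ha σ h, hb σ h, add_zero]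
  smul_mem' := fun c ω h σ hσ => by simp only [Pi.smul_apply, h σ hσ, smul_zero]

/-- The form monomial `x^α dx_σ`. -/
noncomputable def formMonomial {n : ℕ} (α : Fin n →₀ ℕ) (σ : Finset (Fin n)) : PolyForm n :=
  fun τ => if τ = σ then monomial α 1 else 0

/-- The (total) degree `|α|` of a multi-index. -/
def mdeg {n : ℕ} (α : Fin n →₀ ℕ) : ℕ := α.sum fun _ m => m

/-- The linear degree of the form monomial `x^α dx_σ`: the number of `i ∉ σ` with `α i = 1`. -/
def ldeg {n : ℕ} (α : Fin n →₀ ℕ) (σ : Finset (Fin n)) : ℕ :=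
  ((σᶜ).filter fun i => α i = 1).card

/-- `H_rΛ^k(ℝ^n)`: `k`-forms with homogeneous degree-`r` polynomial coefficients. -/
noncomputable def Hspace (n r k : ℕ) : Submodule ℝ (PolyForm n) :=
  Submodule.span ℝ {ω | ∃ α σ, σ.card = k ∧ mdeg α = r ∧ ω = formMonomial α σ}

/-- `P_rΛ^k(ℝ^n)`: `k`-forms with polynomial coefficients of degree at most `r`. -/
noncomputable def Pspace (n r k : ℕ) : Submodule ℝ (PolyForm n) :=
  Submodule.span ℝ {ω | ∃ α σ, σ.card = k ∧ mdeg α ≤ r ∧ ω = formMonomial α σ}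

/-- `H_{r,l}Λ^k(ℝ^n)`: homogeneous degree-`r` `k`-forms of linear degree at least `l`. -/
noncomputable def Hl (n r l k : ℕ) : Submodule ℝ (PolyForm n) :=
  Submodule.span ℝ
    {ω | ∃ α σ, σ.card = k ∧ mdeg α = r ∧ l ≤ ldeg α σ ∧ ω = formMonomial α σ}

/-- `J_rΛ^k(ℝ^n) := Σ_{l ≥ 1} κ H_{r+l-1, l}Λ^{k+1}(ℝ^n)` (here `l` is reindexed as `l+1`). -/
noncomputable def Jspace (n r k : ℕ) : Submodule ℝ (PolyForm n) :=
  ⨆ l : ℕ, Submodule.map (koszul n) (Hl n (r + l) (l + 1) (k + 1))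

/-- The trimmed polynomial space `P_r^-Λ^k := P_{r-1}Λ^k ⊕ κ H_{r-1}Λ^{k+1}`. -/
noncomputable def PminusSpace (n r k : ℕ) : Submodule ℝ (PolyForm n) :=
  Pspace n (r - 1) k ⊔ Submodule.map (koszul n) (Hspace n (r - 1) (k + 1))

/-- The serendipity space `S_rΛ^k := P_rΛ^k + J_rΛ^k + d J_{r+1}Λ^{k-1}`
(the last summand being absent for `k = 0`). -/
noncomputable def Sspace (n r k : ℕ) : Submodule ℝ (PolyForm n) :=
  Pspace n r k ⊔ Jspace n r k ⊔
    (if k = 0 then ⊥ else Submodule.map (extD n) (Jspace n (r + 1) (k - 1)))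

/-- The trimmed serendipity space `S_r^-Λ^k := S_{r-1}Λ^k + κ S_{r-1}Λ^{k+1}`. -/
noncomputable def SminusSpace (n r k : ℕ) : Submodule ℝ (PolyForm n) :=
  Sspace n (r - 1) k ⊔ Submodule.map (koszul n) (Sspace n (r - 1) (k + 1))

/-!
`S_r` is a summand of `S_{r+1}^-`. For the other inclusion, besides `S_r ⊆ S_{r+1}` one needs
`κ S_rΛ^{k+1} ⊆ S_{r+1}Λ^k`, checked summand by summand: `κ` raises the degree of `P_rΛ^{k+1}` by
one, it kills `J_r` because `κ ∘ κ = 0`, and on `d J_{r+1}` it is governed by the Cartan homotopy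
formula `κ d + d κ = r + k` on `H_rΛ^k`: since `κ ∘ κ = 0`, it gives `κ d κ ω = (r + k) κ ω` for
`ω ∈ H_rΛ^k`, whence `κ d J_{r+1} ⊆ J_{r+1}`. The Cartan formula comes from Euler's identity, once
`H_rΛ^k` is identified with the `k`-forms whose coefficients are homogeneous of degree `r`.
-/

section Signs

variable {n : ℕ}

lemma sgn_mul_self (σ : Finset (Fin n)) (i : Fin n) : sgn σ i * sgn σ i = 1 := by
  rw [sgn, ← mul_pow]
  norm_num

lemma sgn_insert_self (σ : Finset (Fin n)) (i : Fin n) : sgn (insert i σ) i = sgn σ i := by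
  rw [sgn, sgn, Finset.filter_insert, if_neg (lt_irrefl i)]

lemma sgn_erase_self (σ : Finset (Fin n)) (i : Fin n) : sgn (σ.erase i) i = sgn σ i := by
  rw [sgn, sgn, Finset.filter_erase, Finset.erase_eq_of_notMem (by simp)]

lemma sgn_insert {σ : Finset (Fin n)} {i : Fin n} (hi : i ∉ σ) (j : Fin n) :
    sgn (insert i σ) j = sgn σ j * (-1) ^ (if i < j then 1 else 0) := by
  rw [sgn, sgn, ← pow_add, Finset.filter_insert]
  split_ifs with h
  · rw [Finset.card_insert_of_notMem (by simp [hi])]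
  · rfl

lemma sgn_mul_sgn_insert_swap {σ : Finset (Fin n)} {i j : Fin n} (hi : i ∉ σ) (hj : j ∉ σ)
    (hij : i ≠ j) : sgn σ i * sgn (insert i σ) j = -(sgn σ j * sgn (insert j σ) i) := by
  rw [sgn_insert hi, sgn_insert hj]
  rcases hij.lt_or_gt with h | h <;> simp only [h, h.not_gt, if_true, if_false, pow_zero, pow_one] <;> ring

lemma sgn_mul_sgn_erase_swap {σ : Finset (Fin n)} {i j : Fin n} (hi : i ∈ σ) (hj : j ∉ σ) :
    sgn σ j * sgn (insert j σ) i = -(sgn σ i * sgn (σ.erase i) j) := by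
  have hσ := sgn_insert (Finset.notMem_erase i σ) j
  rw [Finset.insert_erase hi] at hσ
  rw [sgn_insert hj, hσ]
  rcases (ne_of_mem_of_not_mem hi hj).lt_or_gt with h | h <;> simp only [h, h.not_gt, if_true, if_false, pow_zero, pow_one] <;> ring

end Signs

lemma Finset.sum_sum_eq_zero_of_antisymm {ι R : Type*} [NonAssocRing R] [NoZeroDivisors R]
    [CharZero R] (s : Finset ι) {f : ι → ι → R} (hf : ∀ i ∈ s, ∀ j ∈ s, f i j = -f j i) :
    ∑ i ∈ s, ∑ j ∈ s, f i j = 0 := by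
  rw [← add_self_eq_zero]
  nth_rewrite 2 [Finset.sum_comm]
  rw [← Finset.sum_add_distrib]
  refine Finset.sum_eq_zero fun i hi => ?_
  rw [← Finset.sum_add_distrib]
  exact Finset.sum_eq_zero fun j hj => by rw [hf i hi j hj, neg_add_cancel]

section Koszul

variable {n : ℕ}

lemma koszul_apply (ω : PolyForm n) (σ : Finset (Fin n)) :
    koszul n ω σ = ∑ i ∈ σᶜ, sgn σ i * X i * ω (insert i σ) := rfl

lemma extD_apply (ω : PolyForm n) (σ : Finset (Fin n)) :
    extD n ω σ = ∑ i ∈ σ, sgn σ i * pderiv i (ω (σ.erase i)) := rfl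

lemma koszul_koszul (ω : PolyForm n) : koszul n (koszul n ω) = 0 := by
  funext σ
  -- Padding the inner sum over `(insert i σ)ᶜ = σᶜ.erase i` with a zero diagonal term makes the
  -- double sum one over `σᶜ × σᶜ` of an antisymmetric summand.
  let f : Fin n → Fin n → MvPolynomial (Fin n) ℝ := fun i j =>
    if i = j then 0 else sgn σ i * sgn (insert i σ) j * (X i * X j * ω (insert j (insert i σ)))
  have hrow : ∀ i ∈ σᶜ, sgn σ i * X i * koszul n ω (insert i σ) = ∑ j ∈ σᶜ, f i j := by
    intro i hi
    rw [koszul_apply, Finset.compl_insert, ← Finset.add_sum_erase _ _ hi, Finset.mul_sum]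
    simp only [f, if_pos rfl, zero_add]
    refine Finset.sum_congr rfl fun j hj => ?_
    rw [if_neg (Finset.ne_of_mem_erase hj).symm]
    ring
  have hf : ∀ i ∈ σᶜ, ∀ j ∈ σᶜ, f i j = -f j i := by
    intro i hi j hj
    by_cases hij : i = j
    · simp [f, hij]
    · simp only [f, if_neg hij, if_neg (Ne.symm hij), Finset.insert_comm j i σ,
        sgn_mul_sgn_insert_swap (Finset.mem_compl.mp hi) (Finset.mem_compl.mp hj) hij]
      ring
  rw [koszul_apply, Finset.sum_congr rfl hrow]
  exact Finset.sum_sum_eq_zero_of_antisymm _ hf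

end Koszul

section Cartan

variable {n : ℕ}

lemma pderiv_sgn_mul (σ : Finset (Fin n)) (i j : Fin n) (p : MvPolynomial (Fin n) ℝ) :
    pderiv j (sgn σ i * p) = sgn σ i * pderiv j p := by
  simp [sgn]

lemma koszul_extD_apply (ω : PolyForm n) (σ : Finset (Fin n)) :
    koszul n (extD n ω) σ = ∑ i ∈ σᶜ, X i * pderiv i (ω σ) +
      ∑ i ∈ σᶜ, ∑ j ∈ σ, sgn σ i * sgn (insert i σ) j *
        (X i * pderiv j (ω (insert i (σ.erase j)))) := by
  rw [koszul_apply, ← Finset.sum_add_distrib]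
  refine Finset.sum_congr rfl fun i hi => ?_
  have hi : i ∉ σ := Finset.mem_compl.mp hi
  rw [extD_apply, Finset.sum_insert hi, mul_add, Finset.mul_sum, Finset.erase_insert hi,
    sgn_insert_self]
  congr 1
  · linear_combination (X i * pderiv i (ω σ)) * sgn_mul_self σ i
  · refine Finset.sum_congr rfl fun j hj => ?_
    rw [Finset.erase_insert_of_ne (ne_of_mem_of_not_mem hj hi).symm]
    ring

lemma extD_koszul_apply (ω : PolyForm n) (σ : Finset (Fin n)) :
    extD n (koszul n ω) σ = ∑ i ∈ σ, (ω σ + X i * pderiv i (ω σ)) +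
      ∑ i ∈ σ, ∑ j ∈ σᶜ, sgn σ i * sgn (σ.erase i) j *
        (X j * pderiv i (ω (insert j (σ.erase i)))) := by
  rw [extD_apply, ← Finset.sum_add_distrib]
  refine Finset.sum_congr rfl fun i hi => ?_
  rw [koszul_apply, Finset.compl_erase, Finset.sum_insert (by simp [hi]), map_add, mul_add,
    map_sum, Finset.mul_sum, Finset.insert_erase hi, sgn_erase_self, mul_assoc, pderiv_sgn_mul,
    pderiv_mul, pderiv_X_self, one_mul]
  congr 1
  · linear_combination (ω σ + X i * pderiv i (ω σ)) * sgn_mul_self σ i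
  · refine Finset.sum_congr rfl fun j hj => ?_
    have hji : j ≠ i := (ne_of_mem_of_not_mem hi (Finset.mem_compl.mp hj)).symm
    rw [mul_assoc, pderiv_sgn_mul, pderiv_mul, pderiv_X_of_ne hji, zero_mul, zero_add]
    ring

lemma koszul_extD_add_extD_koszul_apply (ω : PolyForm n) (σ : Finset (Fin n)) :
    koszul n (extD n ω) σ + extD n (koszul n ω) σ =
      ∑ i, X i * pderiv i (ω σ) + σ.card • ω σ := by
  have hcross : ∑ i ∈ σᶜ, ∑ j ∈ σ, sgn σ i * sgn (insert i σ) j *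
        (X i * pderiv j (ω (insert i (σ.erase j)))) +
      ∑ i ∈ σ, ∑ j ∈ σᶜ, sgn σ i * sgn (σ.erase i) j *
        (X j * pderiv i (ω (insert j (σ.erase i)))) = 0 := by
    rw [Finset.sum_comm (s := σ), ← Finset.sum_add_distrib]
    refine Finset.sum_eq_zero fun i hi => ?_
    rw [← Finset.sum_add_distrib]
    refine Finset.sum_eq_zero fun j hj => ?_
    rw [sgn_mul_sgn_erase_swap hj (Finset.mem_compl.mp hi)]
    ring
  rw [koszul_extD_apply, extD_koszul_apply, Finset.sum_add_distrib, Finset.sum_const, ←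
    Finset.sum_compl_add_sum σ]
  linear_combination hcross

end Cartan

section Homogeneous

variable {n : ℕ}

lemma sum_smul_formMonomial (ω : PolyForm n) :
    ∑ σ, ∑ α ∈ (ω σ).support, coeff α (ω σ) • formMonomial α σ = ω := by
  funext τ
  rw [Finset.sum_apply, Fintype.sum_eq_single τ fun σ hσ => by simp [formMonomial, hσ.symm]]
  simp only [Finset.sum_apply, Pi.smul_apply, formMonomial, if_pos, smul_monomial, smul_eq_mul,
    mul_one]
  exact (ω τ).support_sum_monomial_coeff

lemma mem_Hspace_iff {R k : ℕ} {ω : PolyForm n} :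
    ω ∈ Hspace n R k ↔ (∀ σ, (ω σ).IsHomogeneous R) ∧ ω ∈ Lambda n k := by
  constructor
  · intro hω
    suffices Hspace n R k ≤
        Submodule.pi Set.univ (fun _ => homogeneousSubmodule (Fin n) ℝ R) ⊓ Lambda n k by
      obtain ⟨hhom, hΛ⟩ := this hω
      exact ⟨fun σ => hhom σ trivial, hΛ⟩
    rw [Hspace, Submodule.span_le]
    rintro _ ⟨α, σ, hσ, hα, rfl⟩
    refine ⟨fun τ _ => ?_, fun τ hτ => if_neg (by rintro rfl; exact hτ hσ)⟩
    unfold formMonomial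
    split_ifs
    · exact isHomogeneous_monomial _ hα
    · exact isHomogeneous_zero _ _ _
  · rintro ⟨hhom, hΛ⟩
    rw [← sum_smul_formMonomial ω]
    refine Submodule.sum_mem _ fun σ _ => Submodule.sum_mem _ fun α hα => ?_
    refine Submodule.smul_mem _ _ (Submodule.subset_span ⟨α, σ, ?_, ?_, rfl⟩)
    · by_contra hσ
      simp [hΛ σ hσ] at hα
    · exact ((hhom σ).degree_eq_sum_deg_support hα).symm

lemma isHomogeneous_sgn (σ : Finset (Fin n)) (i : Fin n) : (sgn σ i).IsHomogeneous 0 := by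
  rw [sgn]
  simpa using (isHomogeneous_one (Fin n) ℝ).neg.pow (σ.filter (· < i)).card

lemma koszul_mem_Hspace {R k : ℕ} {ω : PolyForm n} (hω : ω ∈ Hspace n R (k + 1)) :
    koszul n ω ∈ Hspace n (R + 1) k := by
  obtain ⟨hhom, hΛ⟩ := mem_Hspace_iff.mp hω
  refine mem_Hspace_iff.mpr ⟨fun σ => ?_, fun σ hσ => ?_⟩
  · refine IsHomogeneous.sum _ _ _ fun i _ => ?_
    simpa [add_comm] using ((isHomogeneous_sgn σ i).mul (isHomogeneous_X ℝ i)).mul (hhom _)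
  · refine Finset.sum_eq_zero fun i hi => ?_
    rw [hΛ _ (by rw [Finset.card_insert_of_notMem (Finset.mem_compl.mp hi)]; omega), mul_zero]

lemma extD_mem_Hspace {R k : ℕ} {ω : PolyForm n} (hω : ω ∈ Hspace n R k) :
    extD n ω ∈ Hspace n (R - 1) (k + 1) := by
  obtain ⟨hhom, hΛ⟩ := mem_Hspace_iff.mp hω
  refine mem_Hspace_iff.mpr ⟨fun σ => ?_, fun σ hσ => ?_⟩
  · refine IsHomogeneous.sum _ _ _ fun i _ => ?_
    simpa using (isHomogeneous_sgn σ i).mul (hhom _).pderiv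
  · refine Finset.sum_eq_zero fun i hi => ?_
    have := Finset.card_pos.mpr ⟨i, hi⟩
    rw [hΛ _ (by rw [Finset.card_erase_of_mem hi]; omega), map_zero, mul_zero]

lemma koszul_extD_add_extD_koszul {R k : ℕ} {ω : PolyForm n} (hω : ω ∈ Hspace n R k) :
    koszul n (extD n ω) + extD n (koszul n ω) = ((R + k : ℕ) : ℝ) • ω := by
  obtain ⟨hhom, hΛ⟩ := mem_Hspace_iff.mp hω
  funext σ
  rw [Pi.add_apply, koszul_extD_add_extD_koszul_apply, (hhom σ).sum_X_mul_pderiv, Pi.smul_apply]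
  by_cases hσ : σ.card = k
  · rw [hσ, ← add_smul, Nat.cast_smul_eq_nsmul]
  · simp [hΛ σ hσ]

lemma koszul_extD_koszul {R k : ℕ} {ω : PolyForm n} (hω : ω ∈ Hspace n R (k + 1)) :
    koszul n (extD n (koszul n ω)) = ((R + (k + 1) : ℕ) : ℝ) • koszul n ω := by
  simpa [koszul_koszul] using congrArg (koszul n) (koszul_extD_add_extD_koszul hω)

end Homogeneous

section Serendipity

variable {n : ℕ}

lemma Pspace_eq_iSup (r k : ℕ) : Pspace n r k = ⨆ m ≤ r, Hspace n m k := by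
  refine le_antisymm ?_ (iSup₂_le fun m hm => ?_)
  · rw [Pspace, Submodule.span_le]
    rintro _ ⟨α, σ, hσ, hα, rfl⟩
    exact le_iSup₂ (f := fun m _ => Hspace n m k) (mdeg α) hα
      (Submodule.subset_span ⟨α, σ, hσ, rfl, rfl⟩)
  · exact Submodule.span_mono fun _ ⟨α, σ, hσ, hα, hω⟩ => ⟨α, σ, hσ, hα.trans_le hm, hω⟩

lemma Pspace_mono {r r' k : ℕ} (h : r ≤ r') : Pspace n r k ≤ Pspace n r' k :=
  Submodule.span_mono fun _ ⟨α, σ, hσ, hα, hω⟩ => ⟨α, σ, hσ, hα.trans h, hω⟩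

lemma Hspace_le_Pspace (r k : ℕ) : Hspace n r k ≤ Pspace n r k :=
  Submodule.span_mono fun _ ⟨α, σ, hσ, hα, hω⟩ => ⟨α, σ, hσ, hα.le, hω⟩

lemma map_koszul_Pspace (r k : ℕ) :
    (Pspace n r (k + 1)).map (koszul n) ≤ Pspace n (r + 1) k := by
  rw [Pspace_eq_iSup, Submodule.map_le_iff_le_comap]
  refine iSup₂_le fun m hm ω hω => ?_
  exact Pspace_mono (by omega) (Hspace_le_Pspace _ _ (koszul_mem_Hspace hω))

lemma map_extD_Pspace (r k : ℕ) :
    (Pspace n (r + 1) k).map (extD n) ≤ Pspace n r (k + 1) := by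
  rw [Pspace_eq_iSup, Submodule.map_le_iff_le_comap]
  refine iSup₂_le fun m hm ω hω => ?_
  exact Pspace_mono (by omega) (Hspace_le_Pspace _ _ (extD_mem_Hspace hω))

lemma Hl_le_Hspace (r l k : ℕ) : Hl n r l k ≤ Hspace n r k :=
  Submodule.span_mono fun _ ⟨α, σ, hσ, hα, _, hω⟩ => ⟨α, σ, hσ, hα, hω⟩

lemma Hl_anti {r l l' k : ℕ} (h : l' ≤ l) : Hl n r l k ≤ Hl n r l' k :=
  Submodule.span_mono fun _ ⟨α, σ, hσ, hα, hl, hω⟩ => ⟨α, σ, hσ, hα, h.trans hl, hω⟩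

lemma Jspace_le_ker_koszul (r k : ℕ) : Jspace n r k ≤ LinearMap.ker (koszul n) :=
  iSup_le fun _ => by
    rintro _ ⟨ω, _, rfl⟩
    exact LinearMap.mem_ker.mpr (koszul_koszul ω)

lemma Jspace_le_Pspace_sup_Jspace (r k : ℕ) :
    Jspace n r k ≤ Pspace n (r + 1) k ⊔ Jspace n (r + 1) k := by
  refine iSup_le fun l => ?_
  rcases l with _ | l
  · refine le_sup_of_le_left (le_trans (Submodule.map_mono ?_) (map_koszul_Pspace r k))
    exact (Hl_le_Hspace _ _ _).trans (Hspace_le_Pspace _ _)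
  · refine le_sup_of_le_right (le_trans (Submodule.map_mono ?_)
      (le_iSup (fun l => (Hl n (r + 1 + l) (l + 1) (k + 1)).map (koszul n)) l))
    rw [show r + (l + 1) = r + 1 + l by omega]
    exact Hl_anti (by omega)

lemma map_koszul_map_extD_Jspace (r k : ℕ) :
    ((Jspace n r k).map (extD n)).map (koszul n) ≤ Jspace n r k := by
  rw [Jspace, Submodule.map_iSup, Submodule.map_iSup]
  refine iSup_mono fun l => ?_
  rintro _ ⟨_, ⟨_, ⟨ω, hω, rfl⟩, rfl⟩, rfl⟩
  rw [koszul_extD_koszul (Hl_le_Hspace _ _ _ hω)]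
  exact Submodule.smul_mem _ _ ⟨ω, hω, rfl⟩

lemma Sspace_mono (r k : ℕ) : Sspace n r k ≤ Sspace n (r + 1) k := by
  have hPJ : Pspace n r k ⊔ Jspace n r k ≤ Pspace n (r + 1) k ⊔ Jspace n (r + 1) k :=
    sup_le (le_sup_of_le_left (Pspace_mono r.le_succ)) (Jspace_le_Pspace_sup_Jspace r k)
  rcases k with _ | k
  · simpa only [Sspace, if_true, sup_bot_eq] using hPJ
  · simp only [Sspace, Nat.add_one_ne_zero, if_false, Nat.add_sub_cancel]
    have hdJ : (Jspace n (r + 1) k).map (extD n) ≤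
        Pspace n (r + 1) (k + 1) ⊔ (Jspace n (r + 1 + 1) k).map (extD n) := by
      refine (Submodule.map_mono (Jspace_le_Pspace_sup_Jspace (r + 1) k)).trans ?_
      rw [Submodule.map_sup]
      exact sup_le_sup_right (map_extD_Pspace _ _) _
    exact sup_le (hPJ.trans le_sup_left) (hdJ.trans (sup_le_sup_right le_sup_left _))

lemma map_koszul_Sspace (r k : ℕ) :
    (Sspace n r (k + 1)).map (koszul n) ≤ Sspace n (r + 1) k := by
  simp only [Sspace, Nat.add_one_ne_zero, if_false, Nat.add_sub_cancel, Submodule.map_sup]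
  refine sup_le (sup_le ?_ ?_) ?_
  · exact le_sup_of_le_left (le_sup_of_le_left (map_koszul_Pspace r k))
  · exact Submodule.map_le_iff_le_comap.mpr
      ((Jspace_le_ker_koszul r (k + 1)).trans (LinearMap.ker_le_comap _))
  · exact le_sup_of_le_left (le_sup_of_le_right (map_koszul_map_extD_Jspace (r + 1) k))

end Serendipity

theorem Sminus_inclusion_general (n r k : ℕ) :
    Sspace n r k ≤ SminusSpace n (r + 1) k ∧
    SminusSpace n (r + 1) k ≤ Sspace n (r + 1) k := by
  simp only [SminusSpace, Nat.add_sub_cancel]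
  exact ⟨le_sup_left, sup_le (Sspace_mono r k) (map_koszul_Sspace r k)⟩

/-- inclusion property
`S_rΛ^k(ℝ^n) ⊆ S_{r+1}^-Λ^k(ℝ^n) ⊆ S_{r+1}Λ^k(ℝ^n)`. -/
theorem Sminus_inclusion (n r k : ℕ) (hn : 1 ≤ n) (hr : 1 ≤ r) (hk : k ≤ n) :
    Sspace n r k ≤ SminusSpace n (r + 1) k ∧
    SminusSpace n (r + 1) k ≤ Sspace n (r + 1) k :=
  Sminus_inclusion_general n r k
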